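/- arXiv:math-ph/0601056 — 2 statements merged into one kernel-verified Lean document; each statement's English description precedes it below -/
import Mathlib

section
/- For every t > 0, the integral ∫_0^1 ((λ² − 1)/(λ² + 1)) · (1 + t²)/((λ + t)(1 + λt)) dλ equals log(2t/(1+t)²). -/
open Real Set

/-!
The integrand splits into partial fractions as `2l/(1+l²) - 1/(l+t) - t/(1+lt)`, so
`log (1+l²) - log (l+t) - log (1+lt)` is an antiderivative on `[0,1]`; its values at `1` and `0`
are `log (2/(1+t)²)` and `log (1/t)`.
-/

lemma integrand_eq_partial_fractions {l t : ℝ} (h₁ : l + t ≠ 0) (h₂ : 1 + l * t ≠ 0) :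
    (l ^ 2 - 1) / (l ^ 2 + 1) * ((1 + t ^ 2) / ((l + t) * (1 + l * t)))
      = 2 * l / (1 + l ^ 2) - 1 / (l + t) - t / (1 + l * t) := by
  have : l ^ 2 + 1 ≠ 0 := by positivity
  field_simp
  ring

lemma hasDerivAt_log_antiderivative {l t : ℝ} (h₁ : l + t ≠ 0) (h₂ : 1 + l * t ≠ 0) :
    HasDerivAt (fun x => log (1 + x ^ 2) - log (x + t) - log (1 + x * t))
      ((l ^ 2 - 1) / (l ^ 2 + 1) * ((1 + t ^ 2) / ((l + t) * (1 + l * t)))) l := by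
  rw [integrand_eq_partial_fractions h₁ h₂]
  have d₁ : HasDerivAt (fun x => log (1 + x ^ 2)) (2 * l / (1 + l ^ 2)) l := by
    simpa using ((hasDerivAt_pow 2 l).const_add 1).log (by positivity)
  have d₂ : HasDerivAt (fun x => log (x + t)) (1 / (l + t)) l := by
    simpa using ((hasDerivAt_id l).add_const t).log h₁
  have d₃ : HasDerivAt (fun x => log (1 + x * t)) (t / (1 + l * t)) l := by
    simpa using (((hasDerivAt_id l).mul_const t).const_add 1).log h₂
  exact (d₁.sub d₂).sub d₃

theorem stmt_1 (t : ℝ) (ht : 0 < t) :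
    ∫ l in (0:ℝ)..1, ((l ^ 2 - 1) / (l ^ 2 + 1)) * ((1 + t ^ 2) / ((l + t) * (1 + l * t)))
      = Real.log (2 * t / (1 + t) ^ 2) := by
  have hpos : ∀ l ∈ uIcc (0:ℝ) 1, 0 < l + t ∧ 0 < 1 + l * t := by
    intro l hl
    rw [uIcc_of_le zero_le_one] at hl
    exact ⟨by linarith [hl.1], by nlinarith [hl.1]⟩
  have hcont : ContinuousOn
      (fun l : ℝ => (l ^ 2 - 1) / (l ^ 2 + 1) * ((1 + t ^ 2) / ((l + t) * (1 + l * t))))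
      (uIcc 0 1) := by
    refine ContinuousOn.mul ?_ (continuousOn_const.div (by fun_prop) fun l hl => ?_)
    · exact Continuous.continuousOn (by fun_prop (disch := intro; positivity))
    · exact mul_ne_zero (hpos l hl).1.ne' (hpos l hl).2.ne'
  rw [intervalIntegral.integral_eq_sub_of_hasDerivAt
    (fun l hl => hasDerivAt_log_antiderivative (hpos l hl).1.ne' (hpos l hl).2.ne')
    hcont.intervalIntegrable]
  have h1t : (0:ℝ) < 1 + t := by linarith
  rw [log_div (by positivity) (by positivity), log_mul two_ne_zero ht.ne', log_pow]
  norm_num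
  ring
end

section
/- For z in the open upper half-plane and γ ∈ [0,1], the analytic continuation f_γ(z) = (1/2)·4^γ·z^γ·(1+z)^{1−2γ} (principal branches) has strictly positive imaginary part. -/
/-!
Writing `z = ‖z‖ e^{ia}` and `1 + z = ‖1 + z‖ e^{ib}` with principal arguments, the number
`f_γ(z)` is a positive real multiple of `e^{iθ}` with `θ = γa + (1 - 2γ)b = (1 - γ)b + γ(a - b)`.
For `Im z > 0` we have `0 < b < a < π` (as `sin (a - b) = Im z / (‖z‖ ‖1 + z‖) > 0`), so `θ` is
a convex combination of `b` and `a - b`, both in `(0, π)`; hence `sin θ > 0`.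
-/

open Complex Real Set

namespace Complex

lemma cpow_ofReal_eq_norm_rpow_mul_exp (w : ℂ) (r : ℝ) :
    w ^ (r : ℂ) = ((‖w‖ ^ r : ℝ) : ℂ) * exp (((arg w * r : ℝ) : ℂ) * I) := by
  rw [cpow_ofReal, exp_mul_I, ← ofReal_cos, ← ofReal_sin]

lemma arg_mem_Ioo_of_im_pos {z : ℂ} (hz : 0 < z.im) : arg z ∈ Ioo 0 π := by
  refine ⟨(arg_nonneg_iff.2 hz.le).lt_of_ne fun h => ?_, arg_lt_pi_iff.2 (Or.inr hz.ne')⟩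
  exact hz.ne' (arg_eq_zero_iff.1 h.symm).2

lemma arg_ofReal_add_lt_arg {z : ℂ} (hz : 0 < z.im) {t : ℝ} (ht : 0 < t) :
    arg (t + z) < arg z := by
  have htz : 0 < (t + z).im := by simpa using hz
  have hz0 : z ≠ 0 := fun h => by simp [h] at hz
  have htz0 : (t : ℂ) + z ≠ 0 := fun h => by simp [h] at htz
  obtain ⟨ha0, haπ⟩ := arg_mem_Ioo_of_im_pos hz
  obtain ⟨hb0, hbπ⟩ := arg_mem_Ioo_of_im_pos htz
  have hsin : Real.sin (arg z - arg (t + z)) = t * z.im / (‖z‖ * ‖(t : ℂ) + z‖) := by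
    rw [Real.sin_sub, sin_arg, cos_arg htz0, cos_arg hz0, sin_arg]
    simp only [add_re, add_im, ofReal_re, ofReal_im]
    field_simp
    ring
  have hsin_pos : 0 < Real.sin (arg z - arg (t + z)) := by
    rw [hsin]
    exact div_pos (mul_pos ht hz) (mul_pos (norm_pos_iff.2 hz0) (norm_pos_iff.2 htz0))
  by_contra! h
  linarith [Real.sin_nonpos_of_nonpos_of_neg_pi_le (sub_nonpos.2 h) (by linarith)]

lemma mul_arg_add_mul_arg_one_add_mem_Ioo {z : ℂ} (hz : 0 < z.im) {γ : ℝ}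
    (hγ : γ ∈ Icc (0 : ℝ) 1) : γ * arg z + (1 - 2 * γ) * arg (1 + z) ∈ Ioo 0 π := by
  have hb := arg_mem_Ioo_of_im_pos (show 0 < (1 + z).im by simpa using hz)
  have hba : arg (1 + z) < arg z := by simpa using arg_ofReal_add_lt_arg hz one_pos
  have hab : arg z - arg (1 + z) ∈ Ioo 0 π :=
    ⟨sub_pos.2 hba, by linarith [(arg_mem_Ioo_of_im_pos hz).2, hb.1]⟩
  have := convex_Ioo (0 : ℝ) π hb hab (sub_nonneg.2 hγ.2) hγ.1 (by ring)
  convert this using 1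
  simp only [smul_eq_mul]
  ring

end Complex

theorem stmt_18 (z : ℂ) (hz : 0 < z.im) (γ : ℝ) (hγ : γ ∈ Set.Icc (0:ℝ) 1) :
    0 < ((1 / 2 : ℂ) * (4 : ℂ) ^ (γ : ℂ) * z ^ (γ : ℂ) * (1 + z) ^ ((1 : ℂ) - 2 * γ)).im := by
  set θ := γ * arg z + (1 - 2 * γ) * arg (1 + z)
  have hθ : θ ∈ Ioo 0 π := mul_arg_add_mul_arg_one_add_mem_Ioo hz hγ
  have h4 : (4 : ℂ) ^ (γ : ℂ) = ((4 ^ γ : ℝ) : ℂ) := by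
    rw [ofReal_cpow (by norm_num)]
    norm_num
  have hexp : exp ((θ : ℂ) * I) = exp (((arg z * γ : ℝ) : ℂ) * I) *
      exp (((arg (1 + z) * (1 - 2 * γ) : ℝ) : ℂ) * I) := by
    rw [← Complex.exp_add]
    congr 1
    push_cast [θ]
    ring
  have hpolar : (1 / 2 : ℂ) * (4 : ℂ) ^ (γ : ℂ) * z ^ (γ : ℂ) * (1 + z) ^ ((1 : ℂ) - 2 * γ) =
      ((1 / 2 * 4 ^ γ * ‖z‖ ^ γ * ‖1 + z‖ ^ (1 - 2 * γ) : ℝ) : ℂ) * exp ((θ : ℂ) * I) := by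
    rw [h4, show (1 : ℂ) - 2 * γ = ((1 - 2 * γ : ℝ) : ℂ) by push_cast; ring,
      cpow_ofReal_eq_norm_rpow_mul_exp, cpow_ofReal_eq_norm_rpow_mul_exp, hexp]
    push_cast
    ring
  have hz0 : z ≠ 0 := fun h => by simp [h] at hz
  have h1z0 : 1 + z ≠ 0 := fun h => by simpa [hz.ne'] using congrArg im h
  rw [hpolar, im_ofReal_mul, exp_ofReal_mul_I_im]
  exact mul_pos (by positivity) (Real.sin_pos_of_pos_of_lt_pi hθ.1 hθ.2)
end
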